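/- For real numbers a, b, c with 0 ≤ a ≤ b, 0 ≤ c ≤ (b−a)/b², and b² ≥ a·√((a²+2b²)/(2(1−cb))) ≥ (a²+b²)/(2−ca−cb), it holds that cb² + ca²(2 − cb − (2/3)ca) − 2ca·√((b² + (1/2)a²)(1−cb)) ≤ cb²/(2−cb). -/

import Mathlib

private lemma polyA (t y : ℝ) (ht : 0 ≤ t) (ht1 : t ≤ 1) (hy : 0 ≤ y) (hy1 : y ≤ 1 - t)
    (hs : t^2 ≤ 1/2) :
    (t^2*(2-y-(2/3)*y*t)*(2-y) + (1-y)) * (2-y*t-y) ≤ 2*(1-y)*(t^2+1)*(2-y) := by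
  nlinarith [sq_nonneg t, sq_nonneg y, mul_nonneg hy ht, sq_nonneg (1-y), sq_nonneg (t*y), mul_nonneg (mul_nonneg hy hy) ht, sq_nonneg (1-t), mul_nonneg hy (sub_nonneg.2 hy1), sq_nonneg (t-y), mul_nonneg (sub_nonneg.2 hs) hy, mul_nonneg (sub_nonneg.2 hs) (mul_nonneg hy ht)]

private lemma polyB (s y : ℝ) (hy : 0 ≤ y) (hs : 1/2 ≤ s) (h1 : s*(s+2) ≤ 2*(1-y)) :
    (s*(2-y)^2 + (1-y))^2 ≤ 2*s*(s+2)*(1-y)*(2-y)^2 := by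
  nlinarith [mul_nonneg (sub_nonneg.2 h1) (sub_nonneg.2 hs), mul_nonneg (sub_nonneg.2 h1) hy, sq_nonneg (2*s-1), sq_nonneg (s+2*y-1), mul_nonneg hy hy, mul_nonneg (mul_nonneg hy hy) hy, mul_nonneg (sub_nonneg.2 h1) (mul_nonneg hy hy), mul_nonneg (mul_nonneg (sub_nonneg.2 h1) hy) (sub_nonneg.2 hs), sq_nonneg (2*s-1+y)]

private lemma key (t y S : ℝ) (ht : 0 < t) (ht1 : t ≤ 1) (hy : 0 ≤ y) (hy1 : y ≤ 1 - t)
    (hU : t^2*(t^2+2) ≤ 2*(1-y))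
    (hL : t^2+1 ≤ t*S*(2-y*t-y))
    (hS : 0 ≤ S) (hS2 : S^2 = (t^2+2)/(2*(1-y))) :
    t^2*(2-y-(2/3)*y*t)*(2-y) + (1-y) ≤ 2*t*((1-y)*S)*(2-y) := by
  have hy2 : y < 1 := by linarith
  have h1y : 0 < 1 - y := by linarith
  have h2y : 0 < 2 - y := by linarith
  have hyt0 : y*t ≤ y := mul_le_of_le_one_right hy ht1
  have hyt : 0 < 2 - y*t - y := by nlinarith
  rcases le_total (t^2) (1/2) with hcase | hcase
  · have pA := polyA t y ht.le ht1 hy hy1 hcase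
    have hmul := mul_le_mul_of_nonneg_left hL
      (by positivity : (0:ℝ) ≤ 2*(1-y)*(2-y))
    have final : (t^2*(2-y-(2/3)*y*t)*(2-y) + (1-y)) * (2-y*t-y)
        ≤ (2*t*((1-y)*S)*(2-y)) * (2-y*t-y) := by nlinarith [pA, hmul]
    exact le_of_mul_le_mul_right final hyt
  · have pB := polyB (t^2) y hy hcase hU
    have hfac : 0 ≤ 2-y-(2/3)*y*t := by nlinarith
    have hL'nn : 0 ≤ t^2*(2-y-(2/3)*y*t)*(2-y) + (1-y) := by
      have := mul_nonneg (mul_nonneg (sq_nonneg t) hfac) h2y.le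
      linarith
    have hle : t^2*(2-y-(2/3)*y*t)*(2-y) + (1-y) ≤ t^2*(2-y)^2 + (1-y) := by
      nlinarith [mul_nonneg (mul_nonneg (mul_nonneg hy ht.le) (sq_nonneg t)) h2y.le]
    have hRnn : 0 ≤ 2*t*((1-y)*S)*(2-y) := by positivity
    have hR2 : (2*t*((1-y)*S)*(2-y))^2 = 2*t^2*(t^2+2)*(1-y)*(2-y)^2 := by
      have e1 : (2*t*((1-y)*S)*(2-y))^2 = 4*(1-y)^2*(2-y)^2*t^2*S^2 := by ring
      rw [e1, hS2]
      field_simp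
      ring
    have hsq : (t^2*(2-y-(2/3)*y*t)*(2-y) + (1-y))^2 ≤ (2*t*((1-y)*S)*(2-y))^2 := by
      calc (t^2*(2-y-(2/3)*y*t)*(2-y) + (1-y))^2 ≤ (t^2*(2-y)^2 + (1-y))^2 :=
            pow_le_pow_left₀ hL'nn hle 2
        _ ≤ 2*(t^2)*(t^2+2)*(1-y)*(2-y)^2 := pB
        _ = (2*t*((1-y)*S)*(2-y))^2 := by rw [hR2]
    calc t^2*(2-y-(2/3)*y*t)*(2-y) + (1-y)
        = Real.sqrt ((t^2*(2-y-(2/3)*y*t)*(2-y) + (1-y))^2) := (Real.sqrt_sq hL'nn).symm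
      _ ≤ Real.sqrt ((2*t*((1-y)*S)*(2-y))^2) := Real.sqrt_le_sqrt hsq
      _ = 2*t*((1-y)*S)*(2-y) := Real.sqrt_sq hRnn

/-- Technical algebraic inequality (Lemma `norminequal3`). -/
theorem norminequal3 (a b c : ℝ) (hb : 0 < b) (ha : 0 ≤ a) (hab : a ≤ b)
    (hc : 0 ≤ c) (hcb : c ≤ (b - a) / b ^ 2)
    (hupper : b ^ 2 ≥ a * Real.sqrt ((a ^ 2 + 2 * b ^ 2) / (2 * (1 - c * b))))
    (hlower : a * Real.sqrt ((a ^ 2 + 2 * b ^ 2) / (2 * (1 - c * b)))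
        ≥ (a ^ 2 + b ^ 2) / (2 - c * a - c * b)) :
    c * b ^ 2 + c * a ^ 2 * (2 - c * b - (2 / 3) * c * a)
      - 2 * c * a * Real.sqrt ((b ^ 2 + (1 / 2) * a ^ 2) * (1 - c * b))
      ≤ c * b ^ 2 / (2 - c * b) := by
  have hb2 : (0:ℝ) < b^2 := by positivity
  have hbne : b ≠ 0 := ne_of_gt hb
  have hcb2 : c*b^2 ≤ b - a := by
    have := (le_div_iff₀ hb2).mp hcb
    linarith
  set S := Real.sqrt ((a ^ 2 + 2 * b ^ 2) / (2 * (1 - c * b))) with hSdef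
  have hSnn : 0 ≤ S := Real.sqrt_nonneg _
  -- a > 0
  have ha' : 0 < a := by
    rcases ha.lt_or_eq with h | h
    · exact h
    · exfalso
      have hcb1 : c*b ≤ 1 := by nlinarith
      have hpos : 0 < (a^2 + b^2)/(2 - c*a - c*b) := by
        apply div_pos (by positivity)
        nlinarith [mul_nonneg hc ha]
      have h0 : a * S = 0 := by rw [← h]; ring
      linarith [hlower, h0.symm ▸ hlower]
  have h1cb : 0 < 1 - c*b := by nlinarith
  have hScb : 0 < 2 - c*a - c*b := by nlinarith [mul_le_mul_of_nonneg_left hab hc]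
  have hS2 : S^2 = (a^2 + 2*b^2)/(2*(1 - c*b)) := Real.sq_sqrt (by positivity)

  -- squared upper bound
  have hU' : a^2*(a^2 + 2*b^2) ≤ 2*(1 - c*b)*b^4 := by
    have h6 : (a*S)^2 ≤ (b^2)^2 := by
      apply pow_le_pow_left₀ (by positivity) (ge_iff_le.mp hupper)
    have h7 : a^2*((a^2 + 2*b^2)/(2*(1 - c*b))) ≤ b^4 := by
      have e : a^2*((a^2 + 2*b^2)/(2*(1 - c*b))) = (a*S)^2 := by
        rw [mul_pow, hS2]
      rw [e]; nlinarith [h6]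
    rw [mul_div_assoc'] at h7
    have := (div_le_iff₀ (by positivity : (0:ℝ) < 2*(1 - c*b))).mp h7
    linarith
  -- lower bound
  have hL' : a^2 + b^2 ≤ a*S*(2 - c*a - c*b) := by
    have := (div_le_iff₀ hScb).mp (ge_iff_le.mp hlower)
    linarith
  -- instantiate key lemma
  have kt : 0 < a/b := div_pos ha' hb
  have kt1 : a/b ≤ 1 := (div_le_one hb).2 hab
  have ky : 0 ≤ c*b := mul_nonneg hc hb.le
  have ky1 : c*b ≤ 1 - a/b := by
    have e1 : (c*b^2 + a)/b ≤ b/b := (div_le_div_iff_of_pos_right hb).2 (by linarith)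
    rw [div_self hbne] at e1
    have e2 : (c*b^2 + a)/b = c*b + a/b := by field_simp
    rw [e2] at e1
    linarith
  have kU : (a/b)^2*((a/b)^2 + 2) ≤ 2*(1 - c*b) := by
    have e : (a/b)^2*((a/b)^2 + 2) = a^2*(a^2 + 2*b^2)/b^4 := by
      field_simp
    rw [e, div_le_iff₀ (by positivity : (0:ℝ) < b^4)]
    linarith
  have kL : (a/b)^2 + 1 ≤ (a/b)*(S/b)*(2 - (c*b)*(a/b) - c*b) := by
    have e1 : (a/b)^2 + 1 = (a^2 + b^2)/b^2 := by field_simp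
    have e2 : (a/b)*(S/b)*(2 - (c*b)*(a/b) - c*b) = a*S*(2 - c*a - c*b)/b^2 := by
      field_simp
    rw [e1, e2]
    exact (div_le_div_iff_of_pos_right hb2).2 hL'
  have kS : 0 ≤ S/b := div_nonneg hSnn hb.le
  have kS2 : (S/b)^2 = ((a/b)^2 + 2)/(2*(1 - c*b)) := by
    have e : ((a/b)^2 + 2) = (a^2 + 2*b^2)/b^2 := by field_simp
    rw [div_pow, hS2, e, div_div, div_div, mul_comm (2*(1 - c*b)) (b^2), mul_comm (b^2) (2*(1 - c*b))]
  have K := key (a/b) (c*b) (S/b) kt kt1 ky ky1 kU kL kS kS2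
  -- scale K by b^2
  have target' : a^2*(2 - c*b - (2/3)*(c*a))*(2 - c*b) + b^2*(1 - c*b)
      ≤ 2*a*(1 - c*b)*S*(2 - c*b) := by
    have hm := mul_le_mul_of_nonneg_left K hb2.le
    have e3 : b^2*((a/b)^2*(2 - c*b - (2/3)*(c*b)*(a/b))*(2 - c*b) + (1 - c*b))
        = a^2*(2 - c*b - (2/3)*(c*a))*(2 - c*b) + b^2*(1 - c*b) := by
      field_simp
    have e4 : b^2*(2*(a/b)*((1 - c*b)*(S/b))*(2 - c*b)) = 2*a*(1 - c*b)*S*(2 - c*b) := by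
      field_simp
    rw [e3, e4] at hm
    exact hm
  -- rewrite the sqrt in the goal
  have hT : Real.sqrt ((b^2 + (1/2)*a^2)*(1 - c*b)) = (1 - c*b)*S := by
    have e : ((1 - c*b)*S)^2 = (b^2 + (1/2)*a^2)*(1 - c*b) := by
      rw [mul_pow, hS2]
      field_simp
      ring
    rw [← e, Real.sqrt_sq (by positivity)]
  rw [hT, le_div_iff₀ (by linarith : (0:ℝ) < 2 - c*b)]
  linarith [mul_le_mul_of_nonneg_left target' hc]
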